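/- Let f = z_{j_1}⋯z_{j_t} be a monomial with m ∉ {j_1,…,j_t}, let I = {j_1,…,j_t} ∩ [q−1], and f_y = (z_1⋯z_{q−1}+1)(z_m+1). Then |S(f) ∩ S(f_y)| = 2^{m−t−1} − 2^{m−t−q+|I|}, where S(g) = {z ∈ F_2^m : g(z) = 1}. -/

import Mathlib

/-!
A point `z` lies in both supports iff `z = 1` on `J`, `z_m = 0`, and `z` is not identically `1`
on `L = [q - 1]`. With `c` the pattern that is `0` at `m` and `1` elsewhere, these are the points
agreeing with `c` on `K = J ∪ {m}` but not on `K ∪ L`. Both sets are determined by fixing the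
coordinates in a set of indices, so the count is `2 ^ (m - |K|) - 2 ^ (m - |K ∪ L|)`, and
`|K ∪ L| = |J| + 1 + (q - 1) - |J ∩ L|`.
-/

open Finset

theorem card_filter_forall_mem_eq {ι α : Type*} [Fintype ι] [DecidableEq ι] [Fintype α]
    (K : Finset ι) (c : ι → α) [DecidablePred fun z : ι → α => ∀ j ∈ K, z j = c j] :
    #{z : ι → α | ∀ j ∈ K, z j = c j} = Fintype.card α ^ (Fintype.card ι - #K) := by
  classical
  have hpi : ({z : ι → α | ∀ j ∈ K, z j = c j} : Finset (ι → α)) =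
      Fintype.piFinset fun j => if j ∈ K then {c j} else univ := by
    ext z
    simp only [mem_filter, mem_univ, true_and, Fintype.mem_piFinset]
    refine ⟨fun h j => ?_, fun h j hj => by simpa [hj] using h j⟩
    split_ifs with hj
    · exact mem_singleton.mpr (h j hj)
    · exact mem_univ _
  rw [hpi, Fintype.card_piFinset]
  simp only [apply_ite card, card_singleton, card_univ, prod_ite, prod_const_one, one_mul,
    prod_const]
  rw [← card_compl, ← compl_filter, filter_mem_eq_inter, univ_inter]

theorem card_filter_forall_mem_eq_and_not {ι α : Type*} [Fintype ι] [DecidableEq ι] [Fintype α]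
    {K K' : Finset ι} (hK : K ⊆ K') (c : ι → α)
    [DecidablePred fun z : ι → α => ∀ j ∈ K, z j = c j]
    [DecidablePred fun z : ι → α => ∀ j ∈ K', z j = c j] :
    #{z : ι → α | (∀ j ∈ K, z j = c j) ∧ ¬ ∀ j ∈ K', z j = c j}
      = Fintype.card α ^ (Fintype.card ι - #K) - Fintype.card α ^ (Fintype.card ι - #K') := by
  classical
  rw [filter_and_not, card_sdiff_of_subset, card_filter_forall_mem_eq,
    card_filter_forall_mem_eq]
  exact monotone_filter_right _ fun z _ hz j hj => hz j (hK hj)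

theorem forall_mem_insert_eq_update {ι α : Type*} [DecidableEq ι] {K : Finset ι} {a : ι}
    (ha : a ∉ K) (z c : ι → α) (b : α) :
    (∀ j ∈ insert a K, z j = Function.update c a b j) ↔ z a = b ∧ ∀ j ∈ K, z j = c j := by
  rw [forall_mem_insert, Function.update_self]
  refine and_congr_right fun _ => forall₂_congr fun j hj => ?_
  rw [Function.update_of_ne (ne_of_mem_of_not_mem hj ha)]

theorem ZMod.prod_eq_one_iff_forall_eq_one {ι : Type*} (s : Finset ι) (z : ι → ZMod 2) :
    ∏ j ∈ s, z j = 1 ↔ ∀ j ∈ s, z j = 1 := by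
  have eq_one_iff (x : ZMod 2) : x = 1 ↔ x ≠ 0 := by decide +revert
  simp only [eq_one_iff, prod_ne_zero_iff]

theorem ZMod.add_one_mul_add_one_eq_one_iff (a b : ZMod 2) :
    (a + 1) * (b + 1) = 1 ↔ a = 0 ∧ b = 0 := by
  decide +revert

/-- Let f = z_{j_1}⋯z_{j_t} be a monomial (with variable set J) not
containing z_m, I = J ∩ [q−1], and f_y = (z_1⋯z_{q−1}+1)(z_m+1). Then
|S(f) ∩ S(f_y)| = 2^{m−t−1} − 2^{m−t−q+|I|}. -/
theorem monomial_without_last_variable_intersection_card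
    (m q : ℕ) (hq : 2 ≤ q) (hm : q ≤ m)
    (J : Finset (Fin m)) (hJ : (⟨m - 1, by omega⟩ : Fin m) ∉ J) :
    ((Finset.univ.filter (fun z : Fin m → ZMod 2 => (∏ j ∈ J, z j) = 1)) ∩
      (Finset.univ.filter (fun z : Fin m → ZMod 2 =>
        ((∏ i ∈ Finset.univ.filter (fun i : Fin m => (i : ℕ) < q - 1), z i) + 1) *
          (z ⟨m - 1, by omega⟩ + 1) = 1))).card
      = 2 ^ (m - J.card - 1) -
        2 ^ (m - J.card - (q - (J.filter (fun j : Fin m => (j : ℕ) < q - 1)).card)) := by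
  set last : Fin m := ⟨m - 1, by omega⟩
  set L : Finset (Fin m) := univ.filter fun i => (i : ℕ) < q - 1
  have hL : last ∉ L := by simp [L, last]; omega
  have hJL : last ∉ J ∪ L := by simp [hJ, hL]
  set c : Fin m → ZMod 2 := Function.update 1 last 0
  have hset : ((univ.filter fun z : Fin m → ZMod 2 => ∏ j ∈ J, z j = 1) ∩
      univ.filter fun z : Fin m → ZMod 2 => ((∏ i ∈ L, z i) + 1) * (z last + 1) = 1) =
      ({z | (∀ j ∈ insert last J, z j = c j) ∧ ¬ ∀ j ∈ insert last (J ∪ L), z j = c j} :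
        Finset (Fin m → ZMod 2)) := by
    ext z
    have eq_zero_iff (x : ZMod 2) : x = 0 ↔ ¬ x = 1 := by decide +revert
    simp only [mem_inter, mem_filter, mem_univ, true_and, ZMod.prod_eq_one_iff_forall_eq_one,
      ZMod.add_one_mul_add_one_eq_one_iff, eq_zero_iff (∏ i ∈ L, z i), forall_mem_insert_eq_update hJ,
      forall_mem_insert_eq_update hJL, forall_mem_union, c, Pi.one_apply]
    tauto
  have hcardL : #L = q - 1 := by simp [L, Fin.card_filter_val_lt]; omega
  have hinter : J ∩ L = J.filter fun j : Fin m => (j : ℕ) < q - 1 := by ext j; simp [L]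
  rw [hset, card_filter_forall_mem_eq_and_not (insert_subset_insert _ subset_union_left),
    card_insert_of_notMem hJ, card_insert_of_notMem hJL, ZMod.card, Fintype.card_fin, ← hinter]
  have hunion := card_union_add_card_inter J L
  have hinter_le := card_le_card (inter_subset_right (s₁ := J) (s₂ := L))
  congr 2; omega
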